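/- arXiv:1508.00845 — 4 statements merged into one kernel-verified Lean document; each statement's English description precedes it below -/
import Mathlib

section
/- Let 0 < λ < m. Then every λ-invariant measure ν of the subcritical BGW process killed at 0 is trivial, i.e. ν(j) = 0 for all j ≥ 1. -/
/-!
Let `G(s) = ∑ ν_j s^j` and let `f` be the generating function of `q`. Since
`∑_j P₀(i,j) s^j = f(s)^i`, invariance says `G(f(s)) = G(q₀) + λ G(s)`. A lower bound on
`P₀(i, 2j)` shows `G(q₀) < ∞`; along the extinction probabilities `t_n = fⁿ(0) → 1` this keeps
`G(t_n) ≤ G(q₀) / (1 - λ)`, so `ν` has finite mass `G(1)`. Then `G(1) - G(t_n) = λⁿ G(1)`, which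
dominates `ν_j (1 - t_n)`. But `f'(1) = m`, so `1 - t_n` decays no faster than `θⁿ` for any
`θ < m`, whence `m ≤ λ`.
-/

open MeasureTheory Real Set

/-- `convPow q i j` is the `i`-fold convolution power of the offspring distribution `q`
evaluated at `j`, i.e. the transition matrix `P₀(i,j)` of the BGW process. -/
noncomputable def convPow (q : ℕ → ℝ) : ℕ → ℕ → ℝ
  | 0, j => if j = 0 then 1 else 0
  | i + 1, j => ∑ k ∈ Finset.range (j + 1), convPow q i (j - k) * q k

/-- `ν` is a `lam`-invariant measure on `ℕ* = {1,2,…}` of the BGW process killed at 0. -/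
def IsInvMeasure (q : ℕ → ℝ) (lam : ℝ) (ν : ℕ → ℝ) : Prop :=
  (∀ n, 0 ≤ ν n) ∧ ν 0 = 0 ∧
  ∀ j : ℕ, 1 ≤ j →
    Summable (fun i => ν i * convPow q i j) ∧
    ∑' i, ν i * convPow q i j = lam * ν j

open scoped ENNReal
open Filter Topology

lemma ENNReal.tsum_mul_tsum_eq_tsum_sum_range (f g : ℕ → ℝ≥0∞) :
    (∑' n, f n) * ∑' n, g n = ∑' n, ∑ k ∈ Finset.range (n + 1), f k * g (n - k) := by
  simp_rw [← Finset.Nat.sum_antidiagonal_eq_sum_range_succ fun k l ↦ f k * g l,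
    ← ENNReal.tsum_mul_right, ← ENNReal.tsum_mul_left,
    ← ENNReal.tsum_prod (f := fun a b => f a * g b),
    ← Finset.HasAntidiagonal.sigmaAntidiagonalEquivProd.tsum_eq, ENNReal.tsum_sigma',
    ← Finset.tsum_subtype]
  rfl

lemma summable_of_mul_choose_two_le {x : ℕ → ℝ} (hx : ∀ i, 0 ≤ x i) {C : ℝ}
    (hC : ∀ i, x i * i.choose 2 ≤ C) : Summable x := by
  rw [← summable_nat_add_iff 2]
  have hinv : Summable fun n : ℕ => 2 * C * (1 / ((n + 1 : ℕ) : ℝ) ^ 2) :=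
    ((summable_nat_add_iff 1).2 (Real.summable_one_div_nat_pow.2 one_lt_two)).mul_left _
  refine hinv.of_nonneg_of_le (fun n => hx _) fun n => ?_
  have h := hC (n + 2)
  rw [Nat.cast_choose_two] at h
  push_cast at h ⊢
  rw [mul_one_div, le_div_iff₀ (by positivity)]
  nlinarith [mul_nonneg (hx (n + 2)) (by positivity : (0 : ℝ) ≤ n + 1)]

lemma le_inv_one_sub_mul_of_le_add_mul {x : ℕ → ℝ≥0∞} {b L : ℝ≥0∞} (h0 : x 0 = 0)
    (h : ∀ n, x (n + 1) ≤ b + L * x n) (n : ℕ) : x n ≤ (1 - L)⁻¹ * b := by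
  have hpartial : ∀ n, x n ≤ (∑ k ∈ Finset.range n, L ^ k) * b := by
    intro n
    induction n with
    | zero => simp [h0]
    | succ n ih =>
      calc x (n + 1) ≤ b + L * ((∑ k ∈ Finset.range n, L ^ k) * b) := (h n).trans (by gcongr)
        _ = (∑ k ∈ Finset.range (n + 1), L ^ k) * b := by
          simp_rw [Finset.sum_range_succ', pow_succ', ← Finset.mul_sum]
          ring
  calc x n ≤ (∑ k ∈ Finset.range n, L ^ k) * b := hpartial n
    _ ≤ (∑' k, L ^ k) * b := by gcongr; exact ENNReal.sum_le_tsum _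
    _ = (1 - L)⁻¹ * b := by rw [ENNReal.tsum_geometric]

lemma le_of_forall_le_mul_pow_of_eventually_mul_le_succ {a : ℕ → ℝ} (ha : ∀ n, 0 < a n)
    {θ lam C : ℝ} (hlam : 0 < lam) (hC : ∀ n, a n ≤ C * lam ^ n)
    (hθ : ∀ᶠ n in atTop, θ * a n ≤ a (n + 1)) : θ ≤ lam := by
  by_contra! hlamθ
  obtain ⟨N, hN⟩ := eventually_atTop.1 hθ
  have hgrow : ∀ p, θ ^ p * a N ≤ a (N + p) := by
    intro p
    induction p with
    | zero => simp
    | succ p ih =>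
      calc θ ^ (p + 1) * a N = θ * (θ ^ p * a N) := by ring
        _ ≤ θ * a (N + p) := mul_le_mul_of_nonneg_left ih (hlam.trans hlamθ).le
        _ ≤ a (N + (p + 1)) := hN (N + p) (by omega)
  obtain ⟨p, hp⟩ := pow_unbounded_of_one_lt (C * lam ^ N / a N) ((one_lt_div hlam).2 hlamθ)
  rw [div_lt_iff₀ (ha N), div_pow, div_mul_eq_mul_div, lt_div_iff₀ (by positivity)] at hp
  have := (hgrow p).trans (hC (N + p))
  rw [pow_add] at this
  linarith

noncomputable def genFun (a : ℕ → ℝ) (t : ℝ) : ℝ := ∑' k, a k * t ^ k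

/-- In `ℝ≥0∞` every series converges, so the double series hidden in the invariance identity can
be exchanged freely. -/
noncomputable def ennGenFun (a : ℕ → ℝ) (s : ℝ≥0∞) : ℝ≥0∞ := ∑' k, ENNReal.ofReal (a k) * s ^ k

section GenFun

variable {a : ℕ → ℝ}

lemma genFun_zero_right (a : ℕ → ℝ) : genFun a 0 = a 0 := by
  rw [genFun, tsum_eq_single 0 fun k hk => by simp [hk]]
  simp

lemma ennGenFun_zero_right (a : ℕ → ℝ) : ennGenFun a 0 = ENNReal.ofReal (a 0) := by
  rw [ennGenFun, tsum_eq_single 0 fun k hk => by simp [hk]]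
  simp

lemma genFun_one_right (a : ℕ → ℝ) : genFun a 1 = ∑' k, a k := by
  simp [genFun]

lemma genFun_nonneg (ha : ∀ k, 0 ≤ a k) {t : ℝ} (ht : 0 ≤ t) : 0 ≤ genFun a t :=
  tsum_nonneg fun k => mul_nonneg (ha k) (pow_nonneg ht k)

lemma summable_mul_pow (ha : ∀ k, 0 ≤ a k) (hs : Summable a) {t : ℝ} (ht0 : 0 ≤ t) (ht1 : t ≤ 1) :
    Summable fun k => a k * t ^ k :=
  hs.of_nonneg_of_le (fun k => mul_nonneg (ha k) (pow_nonneg ht0 k))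
    fun k => mul_le_of_le_one_right (ha k) (pow_le_one₀ ht0 ht1)

lemma hasSum_mul_one_sub_pow (ha : ∀ k, 0 ≤ a k) (hs : Summable a) {t : ℝ} (ht0 : 0 ≤ t)
    (ht1 : t ≤ 1) : HasSum (fun k => a k * (1 - t ^ k)) (∑' k, a k - genFun a t) := by
  unfold genFun
  simpa only [mul_one_sub] using hs.hasSum.sub (summable_mul_pow ha hs ht0 ht1).hasSum

lemma ennGenFun_ofReal (ha : ∀ k, 0 ≤ a k) {t : ℝ} (ht : 0 ≤ t)
    (hsum : Summable fun k => a k * t ^ k) :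
    ennGenFun a (ENNReal.ofReal t) = ENNReal.ofReal (genFun a t) := by
  rw [genFun, ENNReal.ofReal_tsum_of_nonneg (fun k => mul_nonneg (ha k) (pow_nonneg ht k)) hsum]
  exact tsum_congr fun k => by rw [ENNReal.ofReal_mul (ha k), ENNReal.ofReal_pow ht]

lemma lowerSemicontinuous_ennGenFun (a : ℕ → ℝ) : LowerSemicontinuous (ennGenFun a) :=
  lowerSemicontinuous_tsum fun k =>
    ((ENNReal.continuous_const_mul ENNReal.ofReal_ne_top).comp
      (ENNReal.continuous_pow k)).lowerSemicontinuous

end GenFun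

section ConvPow

variable {q : ℕ → ℝ}

lemma convPow_nonneg (hq0 : ∀ k, 0 ≤ q k) (i j : ℕ) : 0 ≤ convPow q i j := by
  induction i generalizing j with
  | zero => unfold convPow; positivity
  | succ i ih => exact Finset.sum_nonneg fun k _ => mul_nonneg (ih _) (hq0 k)

lemma convPow_zero_right (q : ℕ → ℝ) (i : ℕ) : convPow q i 0 = q 0 ^ i := by
  induction i with
  | zero => simp [convPow]
  | succ i ih => simp [convPow, ih, pow_succ]

lemma ennGenFun_convPow (hq0 : ∀ k, 0 ≤ q k) (s : ℝ≥0∞) (i : ℕ) :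
    ennGenFun (convPow q i) s = ennGenFun q s ^ i := by
  induction i with
  | zero =>
    rw [ennGenFun, tsum_eq_single 0 fun j hj => by simp [convPow, hj]]
    simp [convPow]
  | succ i ih =>
    rw [pow_succ', ← ih, ennGenFun, ennGenFun, ennGenFun,
      ENNReal.tsum_mul_tsum_eq_tsum_sum_range]
    refine tsum_congr fun n => ?_
    rw [convPow, ENNReal.ofReal_sum_of_nonneg fun k _ =>
      mul_nonneg (convPow_nonneg hq0 _ _) (hq0 k), Finset.sum_mul]
    refine Finset.sum_congr rfl fun k hk => ?_
    rw [ENNReal.ofReal_mul (convPow_nonneg hq0 _ _),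
      ← Nat.sub_add_cancel (Finset.mem_range_succ_iff.mp hk), pow_add, Nat.add_sub_cancel]
    ring

lemma convPow_add_le_convPow_succ (hq0 : ∀ k, 0 ≤ q k) {j n : ℕ} (hj : 1 ≤ j) (hjn : j ≤ n)
    (i : ℕ) : convPow q i n * q 0 + convPow q i (n - j) * q j ≤ convPow q (i + 1) n := by
  have hsub : ({0, j} : Finset ℕ) ⊆ Finset.range (n + 1) := by
    intro k hk
    simp only [Finset.mem_insert, Finset.mem_singleton] at hk
    rcases hk with rfl | rfl <;> simp only [Finset.mem_range] <;> omega
  calc convPow q i n * q 0 + convPow q i (n - j) * q j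
      = ∑ k ∈ ({0, j} : Finset ℕ), convPow q i (n - k) * q k := by
        rw [Finset.sum_pair (by omega)]; simp
    _ ≤ convPow q (i + 1) n :=
        Finset.sum_le_sum_of_subset_of_nonneg hsub
          fun k _ _ => mul_nonneg (convPow_nonneg hq0 _ _) (hq0 k)

lemma choose_mul_pow_le_convPow (hq0 : ∀ k, 0 ≤ q k) {j : ℕ} (hj : 1 ≤ j) (i n : ℕ) :
    (i.choose n : ℝ) * q j ^ n * q 0 ^ i ≤ convPow q i (n * j) * q 0 ^ n := by
  induction i generalizing n with
  | zero =>
    cases n with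
    | zero => simp [convPow]
    | succ n => simpa using mul_nonneg (convPow_nonneg hq0 0 _) (pow_nonneg (hq0 0) _)
  | succ i ih =>
    cases n with
    | zero => simp [convPow_zero_right]
    | succ n =>
      have hstep := convPow_add_le_convPow_succ hq0 hj (Nat.le_mul_of_pos_left j n.succ_pos) i
      rw [show (n + 1) * j - j = n * j by rw [Nat.succ_mul, Nat.add_sub_cancel]] at hstep
      calc ((i + 1).choose (n + 1) : ℝ) * q j ^ (n + 1) * q 0 ^ (i + 1)
          = (i.choose (n + 1) * q j ^ (n + 1) * q 0 ^ i) * q 0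
            + (i.choose n * q j ^ n * q 0 ^ i) * (q j * q 0) := by
            rw [Nat.choose_succ_succ', Nat.cast_add]; ring
        _ ≤ convPow q i ((n + 1) * j) * q 0 ^ (n + 1) * q 0
            + convPow q i (n * j) * q 0 ^ n * (q j * q 0) :=
            add_le_add (mul_le_mul_of_nonneg_right (ih (n + 1)) (hq0 0))
              (mul_le_mul_of_nonneg_right (ih n) (mul_nonneg (hq0 j) (hq0 0)))
        _ = (convPow q i ((n + 1) * j) * q 0 + convPow q i (n * j) * q j) * q 0 ^ (n + 1) := by
            ring
        _ ≤ convPow q (i + 1) ((n + 1) * j) * q 0 ^ (n + 1) := by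
            have := pow_nonneg (hq0 0) (n + 1)
            gcongr

end ConvPow

section OffspringGenFun

variable {q : ℕ → ℝ} {m : ℝ}

lemma hasSum_one_sub_genFun (hq0 : ∀ k, 0 ≤ q k) (hq1 : HasSum q 1) {t : ℝ} (ht0 : 0 ≤ t)
    (ht1 : t ≤ 1) : HasSum (fun k => q k * (1 - t ^ k)) (1 - genFun q t) := by
  simpa only [hq1.tsum_eq] using hasSum_mul_one_sub_pow hq0 hq1.summable ht0 ht1

lemma genFun_mem_Icc (hq0 : ∀ k, 0 ≤ q k) (hq1 : HasSum q 1) {t : ℝ} (ht0 : 0 ≤ t)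
    (ht1 : t ≤ 1) : genFun q t ∈ Set.Icc 0 1 :=
  ⟨genFun_nonneg hq0 ht0, sub_nonneg.1 <| (hasSum_one_sub_genFun hq0 hq1 ht0 ht1).nonneg
    fun k => mul_nonneg (hq0 k) (sub_nonneg.2 (pow_le_one₀ ht0 ht1))⟩

lemma genFun_lt_one (hq0 : ∀ k, 0 ≤ q k) (hq1 : HasSum q 1) {j : ℕ} (hj : 1 ≤ j) (hqj : 0 < q j)
    {t : ℝ} (ht0 : 0 ≤ t) (ht1 : t < 1) : genFun q t < 1 := by
  have hterm : 0 < q j * (1 - t ^ j) := mul_pos hqj (sub_pos.2 (pow_lt_one₀ ht0 ht1 (by omega)))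
  have := le_hasSum (hasSum_one_sub_genFun hq0 hq1 ht0 ht1.le) j
    fun k _ => mul_nonneg (hq0 k) (sub_nonneg.2 (pow_le_one₀ ht0 ht1.le))
  linarith

lemma one_sub_genFun_le (hq0 : ∀ k, 0 ≤ q k) (hq1 : HasSum q 1)
    (hm : HasSum (fun k : ℕ => (k : ℝ) * q k) m) {t : ℝ} (ht0 : 0 ≤ t) (ht1 : t ≤ 1) :
    1 - genFun q t ≤ m * (1 - t) := by
  refine hasSum_le (fun k => ?_) (hasSum_one_sub_genFun hq0 hq1 ht0 ht1) (hm.mul_right (1 - t))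
  have bernoulli := one_add_mul_le_pow (a := t - 1) (by linarith) k
  rw [add_sub_cancel] at bernoulli
  nlinarith [hq0 k]

lemma mul_pow_mul_one_sub_le_one_sub_pow {t : ℝ} (ht0 : 0 ≤ t) (ht1 : t ≤ 1) {k K : ℕ}
    (hkK : k ≤ K) : k * t ^ K * (1 - t) ≤ 1 - t ^ k := by
  induction k with
  | zero => simp
  | succ k ih =>
    have hK : t ^ K ≤ t ^ k := pow_le_pow_of_le_one ht0 ht1 (by omega)
    have := ih (by omega)
    rw [pow_succ]
    push_cast
    nlinarith

lemma sum_mul_pow_mul_le_one_sub_genFun (hq0 : ∀ k, 0 ≤ q k) (hq1 : HasSum q 1) (K : ℕ) {t : ℝ}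
    (ht0 : 0 ≤ t) (ht1 : t ≤ 1) :
    (∑ k ∈ Finset.range K, (k : ℝ) * q k) * t ^ K * (1 - t) ≤ 1 - genFun q t :=
  calc (∑ k ∈ Finset.range K, (k : ℝ) * q k) * t ^ K * (1 - t)
      = ∑ k ∈ Finset.range K, q k * (k * t ^ K * (1 - t)) := by
        rw [Finset.sum_mul, Finset.sum_mul]
        exact Finset.sum_congr rfl fun k _ => by ring
    _ ≤ ∑ k ∈ Finset.range K, q k * (1 - t ^ k) :=
        Finset.sum_le_sum fun k hk => mul_le_mul_of_nonneg_left
          (mul_pow_mul_one_sub_le_one_sub_pow ht0 ht1 (Finset.mem_range.1 hk).le) (hq0 k)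
    _ ≤ 1 - genFun q t :=
        sum_le_hasSum _ (fun k _ => mul_nonneg (hq0 k) (sub_nonneg.2 (pow_le_one₀ ht0 ht1)))
          (hasSum_one_sub_genFun hq0 hq1 ht0 ht1)

lemma eventually_mul_one_sub_le_one_sub_genFun (hq0 : ∀ k, 0 ≤ q k) (hq1 : HasSum q 1)
    (hm : HasSum (fun k : ℕ => (k : ℝ) * q k) m) {θ : ℝ} (hθ : θ < m) :
    ∀ᶠ t in 𝓝 1, 0 ≤ t → t ≤ 1 → θ * (1 - t) ≤ 1 - genFun q t := by
  obtain ⟨K, hK⟩ := (hm.tendsto_sum_nat.eventually (lt_mem_nhds hθ)).exists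
  have hnear : ∀ᶠ t in 𝓝 (1 : ℝ), θ < (∑ k ∈ Finset.range K, (k : ℝ) * q k) * t ^ K :=
    ((continuous_const.mul (continuous_pow K)).tendsto 1).eventually
      (lt_mem_nhds (by simpa using hK))
  filter_upwards [hnear] with t ht ht0 ht1
  exact (mul_le_mul_of_nonneg_right ht.le (sub_nonneg.2 ht1)).trans
    (sum_mul_pow_mul_le_one_sub_genFun hq0 hq1 K ht0 ht1)

lemma exists_pos_of_hasSum_mul (hm : HasSum (fun k : ℕ => (k : ℝ) * q k) m) (hm0 : 0 < m) :
    ∃ j, 1 ≤ j ∧ 0 < q j := by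
  by_contra! h
  have hle : ∀ k : ℕ, (k : ℝ) * q k ≤ 0 := fun k => by
    rcases Nat.eq_zero_or_pos k with rfl | hk
    · simp
    · exact mul_nonpos_of_nonneg_of_nonpos k.cast_nonneg (h k hk)
  exact hm0.not_ge (hasSum_le hle hm hasSum_zero)

end OffspringGenFun

/-- The probability that the process started from one individual is extinct by generation `n`. -/
noncomputable def extinctionProb (q : ℕ → ℝ) (n : ℕ) : ℝ := (genFun q)^[n] 0

section ExtinctionProb

variable {q : ℕ → ℝ} {m : ℝ}

lemma extinctionProb_zero (q : ℕ → ℝ) : extinctionProb q 0 = 0 := rfl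

lemma extinctionProb_succ (q : ℕ → ℝ) (n : ℕ) :
    extinctionProb q (n + 1) = genFun q (extinctionProb q n) :=
  Function.iterate_succ_apply' _ _ _

lemma extinctionProb_mem_Icc (hq0 : ∀ k, 0 ≤ q k) (hq1 : HasSum q 1) (n : ℕ) :
    extinctionProb q n ∈ Set.Icc 0 1 := by
  induction n with
  | zero => simp [extinctionProb_zero]
  | succ n ih => rw [extinctionProb_succ]; exact genFun_mem_Icc hq0 hq1 ih.1 ih.2

lemma extinctionProb_lt_one (hq0 : ∀ k, 0 ≤ q k) (hq1 : HasSum q 1) {j : ℕ} (hj : 1 ≤ j)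
    (hqj : 0 < q j) (n : ℕ) : extinctionProb q n < 1 := by
  induction n with
  | zero => simp [extinctionProb_zero]
  | succ n ih =>
    rw [extinctionProb_succ]
    exact genFun_lt_one hq0 hq1 hj hqj (extinctionProb_mem_Icc hq0 hq1 n).1 ih

lemma one_sub_extinctionProb_le (hq0 : ∀ k, 0 ≤ q k) (hq1 : HasSum q 1)
    (hm : HasSum (fun k : ℕ => (k : ℝ) * q k) m) (n : ℕ) : 1 - extinctionProb q n ≤ m ^ n := by
  induction n with
  | zero => simp [extinctionProb_zero]
  | succ n ih =>
    obtain ⟨ht0, ht1⟩ := extinctionProb_mem_Icc hq0 hq1 n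
    have hm0 : 0 ≤ m := hm.nonneg fun k => mul_nonneg k.cast_nonneg (hq0 k)
    rw [extinctionProb_succ, pow_succ']
    exact (one_sub_genFun_le hq0 hq1 hm ht0 ht1).trans (mul_le_mul_of_nonneg_left ih hm0)

lemma tendsto_extinctionProb (hq0 : ∀ k, 0 ≤ q k) (hq1 : HasSum q 1)
    (hm : HasSum (fun k : ℕ => (k : ℝ) * q k) m) (hm1 : m < 1) :
    Tendsto (extinctionProb q) atTop (𝓝 1) := by
  have hm0 : 0 ≤ m := hm.nonneg fun k => mul_nonneg k.cast_nonneg (hq0 k)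
  have hlower : Tendsto (fun n => 1 - m ^ n) atTop (𝓝 1) := by
    simpa using tendsto_const_nhds.sub (tendsto_pow_atTop_nhds_zero_of_lt_one hm0 hm1)
  exact tendsto_of_tendsto_of_tendsto_of_le_of_le hlower tendsto_const_nhds
    (fun n => by linarith [one_sub_extinctionProb_le hq0 hq1 hm n])
    fun n => (extinctionProb_mem_Icc hq0 hq1 n).2

end ExtinctionProb

section IsInvMeasure

variable {q : ℕ → ℝ} {lam : ℝ} {ν : ℕ → ℝ}

lemma IsInvMeasure.tsum_ofReal_mul_convPow (hν : IsInvMeasure q lam ν) (hq0 : ∀ k, 0 ≤ q k)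
    {j : ℕ} (hj : 1 ≤ j) :
    ∑' i, ENNReal.ofReal (ν i) * ENNReal.ofReal (convPow q i j) = ENNReal.ofReal (lam * ν j) := by
  obtain ⟨hsum, htsum⟩ := hν.2.2 j hj
  rw [← htsum, ENNReal.ofReal_tsum_of_nonneg
    (fun i => mul_nonneg (hν.1 i) (convPow_nonneg hq0 i j)) hsum]
  exact tsum_congr fun i => (ENNReal.ofReal_mul (hν.1 i)).symm

lemma IsInvMeasure.ennGenFun_ennGenFun (hν : IsInvMeasure q lam ν) (hq0 : ∀ k, 0 ≤ q k)
    (hlam : 0 ≤ lam) (s : ℝ≥0∞) :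
    ennGenFun ν (ennGenFun q s) =
      ennGenFun ν (ENNReal.ofReal (q 0)) + ENNReal.ofReal lam * ennGenFun ν s := by
  have hcoef : ∀ j, (∑' i, ENNReal.ofReal (ν i) * ENNReal.ofReal (convPow q i j)) * s ^ j =
      (if j = 0 then ennGenFun ν (ENNReal.ofReal (q 0)) else 0) +
        ENNReal.ofReal lam * (ENNReal.ofReal (ν j) * s ^ j) := by
    rintro (_ | j)
    · simp [hν.2.1, convPow_zero_right, ennGenFun, ENNReal.ofReal_pow (hq0 0)]
    · rw [hν.tsum_ofReal_mul_convPow hq0 j.succ_pos, ENNReal.ofReal_mul hlam]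
      simp [mul_assoc]
  calc ennGenFun ν (ennGenFun q s)
      = ∑' i, ∑' j, ENNReal.ofReal (ν i) * ENNReal.ofReal (convPow q i j) * s ^ j := by
        rw [ennGenFun]
        simp_rw [← ennGenFun_convPow hq0, ennGenFun, ← ENNReal.tsum_mul_left, mul_assoc]
    _ = ∑' j, (∑' i, ENNReal.ofReal (ν i) * ENNReal.ofReal (convPow q i j)) * s ^ j := by
        rw [ENNReal.tsum_comm]
        simp_rw [ENNReal.tsum_mul_right]
    _ = _ := by
        simp_rw [hcoef]
        rw [ENNReal.tsum_add, tsum_ite_eq, ENNReal.tsum_mul_left]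
        rfl

/-- `P₀(i, 2j) ≥ (i choose 2) q_j² q₀^(i-2)` grows quadratically in `i`, which is what makes the
series converge (`P₀(i, j)` would only give a linear factor). -/
lemma IsInvMeasure.summable_mul_pow_zero (hν : IsInvMeasure q lam ν) (hq0 : ∀ k, 0 ≤ q k)
    {j : ℕ} (hj : 1 ≤ j) (hqj : 0 < q j) : Summable fun i => ν i * q 0 ^ i := by
  obtain ⟨hsum, htsum⟩ := hν.2.2 (2 * j) (by omega)
  refine summable_of_mul_choose_two_le (fun i => mul_nonneg (hν.1 i) (pow_nonneg (hq0 0) i))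
    (C := lam * ν (2 * j) * q 0 ^ 2 / q j ^ 2) fun i => ?_
  have hterm : ν i * convPow q i (2 * j) ≤ lam * ν (2 * j) :=
    htsum ▸ hsum.le_tsum i fun k _ => mul_nonneg (hν.1 k) (convPow_nonneg hq0 k _)
  rw [le_div_iff₀ (by positivity)]
  calc ν i * q 0 ^ i * i.choose 2 * q j ^ 2 = ν i * (i.choose 2 * q j ^ 2 * q 0 ^ i) := by ring
    _ ≤ ν i * (convPow q i (2 * j) * q 0 ^ 2) :=
        mul_le_mul_of_nonneg_left (choose_mul_pow_le_convPow hq0 hj i 2) (hν.1 i)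
    _ = ν i * convPow q i (2 * j) * q 0 ^ 2 := by ring
    _ ≤ lam * ν (2 * j) * q 0 ^ 2 := mul_le_mul_of_nonneg_right hterm (sq_nonneg _)

lemma IsInvMeasure.summable (hν : IsInvMeasure q lam ν) (hq0 : ∀ k, 0 ≤ q k) (hq1 : HasSum q 1)
    {m : ℝ} (hm : HasSum (fun k : ℕ => (k : ℝ) * q k) m) (hm1 : m < 1) (hlam0 : 0 ≤ lam)
    (hlam1 : lam < 1) {j : ℕ} (hj : 1 ≤ j) (hqj : 0 < q j) : Summable ν := by
  set G := fun n => ennGenFun ν (ENNReal.ofReal (extinctionProb q n))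
  have hrec : ∀ n, G (n + 1) = ennGenFun ν (ENNReal.ofReal (q 0)) + ENNReal.ofReal lam * G n := by
    intro n
    obtain ⟨ht0, ht1⟩ := extinctionProb_mem_Icc hq0 hq1 n
    simp only [G, extinctionProb_succ,
      ← ennGenFun_ofReal hq0 ht0 (summable_mul_pow hq0 hq1.summable ht0 ht1),
      hν.ennGenFun_ennGenFun hq0 hlam0]
  have hbound := le_inv_one_sub_mul_of_le_add_mul (x := G)
    (by simp [G, extinctionProb_zero, ennGenFun_zero_right, hν.2.1]) (fun n => (hrec n).le)
  have htend : Tendsto (fun n => ENNReal.ofReal (extinctionProb q n)) atTop (𝓝 1) := by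
    simpa using ENNReal.tendsto_ofReal (tendsto_extinctionProb hq0 hq1 hm hm1)
  have hmass : ennGenFun ν 1 ≤ (1 - ENNReal.ofReal lam)⁻¹ * ennGenFun ν (ENNReal.ofReal (q 0)) :=
    le_of_forall_lt fun y hy =>
      let ⟨n, hn⟩ := (htend.eventually (lowerSemicontinuous_ennGenFun ν 1 y hy)).exists
      hn.trans_le (hbound n)
  have hfin : ennGenFun ν 1 ≠ ⊤ := by
    refine ne_top_of_le_ne_top (ENNReal.mul_ne_top ?_ ?_) hmass
    · exact ENNReal.inv_ne_top.2 (tsub_pos_of_lt (ENNReal.ofReal_lt_one.2 hlam1)).ne'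
    · rw [ennGenFun_ofReal hν.1 (hq0 0) (hν.summable_mul_pow_zero hq0 hj hqj)]
      exact ENNReal.ofReal_ne_top
  simpa [ennGenFun, ENNReal.toReal_ofReal (hν.1 _)] using ENNReal.summable_toReal hfin

lemma IsInvMeasure.genFun_genFun (hν : IsInvMeasure q lam ν) (hq0 : ∀ k, 0 ≤ q k)
    (hq1 : HasSum q 1) (hlam0 : 0 ≤ lam) (hsum : Summable ν) {t : ℝ} (ht0 : 0 ≤ t) (ht1 : t ≤ 1) :
    genFun ν (genFun q t) = genFun ν (q 0) + lam * genFun ν t := by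
  have hν_ofReal : ∀ s, 0 ≤ s → s ≤ 1 →
      ennGenFun ν (ENNReal.ofReal s) = ENNReal.ofReal (genFun ν s) :=
    fun s hs0 hs1 => ennGenFun_ofReal hν.1 hs0 (summable_mul_pow hν.1 hsum hs0 hs1)
  obtain ⟨hf0, hf1⟩ := genFun_mem_Icc hq0 hq1 ht0 ht1
  obtain ⟨hq00, hq01⟩ := genFun_zero_right q ▸ genFun_mem_Icc hq0 hq1 le_rfl zero_le_one
  have h := hν.ennGenFun_ennGenFun hq0 hlam0 (ENNReal.ofReal t)
  rw [ennGenFun_ofReal hq0 ht0 (summable_mul_pow hq0 hq1.summable ht0 ht1), hν_ofReal _ hf0 hf1,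
    hν_ofReal _ hq00 hq01, hν_ofReal _ ht0 ht1, ← ENNReal.ofReal_mul hlam0,
    ← ENNReal.ofReal_add (genFun_nonneg hν.1 hq00)
      (mul_nonneg hlam0 (genFun_nonneg hν.1 ht0))] at h
  exact (ENNReal.ofReal_eq_ofReal_iff (genFun_nonneg hν.1 hf0)
    (add_nonneg (genFun_nonneg hν.1 hq00) (mul_nonneg hlam0 (genFun_nonneg hν.1 ht0)))).1 h

lemma IsInvMeasure.mul_one_sub_extinctionProb_le (hν : IsInvMeasure q lam ν)
    (hq0 : ∀ k, 0 ≤ q k) (hq1 : HasSum q 1) (hlam0 : 0 ≤ lam) (hsum : Summable ν) {j : ℕ}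
    (hj : 1 ≤ j) (n : ℕ) : ν j * (1 - extinctionProb q n) ≤ lam ^ n * ∑' k, ν k := by
  have hstep : ∀ t, 0 ≤ t → t ≤ 1 →
      ∑' k, ν k - genFun ν (genFun q t) = lam * (∑' k, ν k - genFun ν t) := by
    intro t ht0 ht1
    have hone := hν.genFun_genFun hq0 hq1 hlam0 hsum zero_le_one le_rfl
    rw [genFun_one_right, hq1.tsum_eq, genFun_one_right] at hone
    rw [hν.genFun_genFun hq0 hq1 hlam0 hsum ht0 ht1]
    linear_combination hone
  have hdecay : ∑' k, ν k - genFun ν (extinctionProb q n) = lam ^ n * ∑' k, ν k := by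
    induction n with
    | zero => simp [extinctionProb_zero, genFun_zero_right, hν.2.1]
    | succ n ih =>
      obtain ⟨ht0, ht1⟩ := extinctionProb_mem_Icc hq0 hq1 n
      rw [extinctionProb_succ, hstep _ ht0 ht1, ih, pow_succ']
      ring
  obtain ⟨ht0, ht1⟩ := extinctionProb_mem_Icc hq0 hq1 n
  calc ν j * (1 - extinctionProb q n) ≤ ν j * (1 - extinctionProb q n ^ j) :=
        mul_le_mul_of_nonneg_left (by linarith [pow_le_of_le_one ht0 ht1 (by omega : j ≠ 0)])
          (hν.1 j)
    _ ≤ ∑' k, ν k - genFun ν (extinctionProb q n) :=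
        le_hasSum (hasSum_mul_one_sub_pow hν.1 hsum ht0 ht1) j
          fun k _ => mul_nonneg (hν.1 k) (sub_nonneg.2 (pow_le_one₀ ht0 ht1))
    _ = lam ^ n * ∑' k, ν k := hdecay

end IsInvMeasure

theorem no_invariant_measure_below_m_general
    (q : ℕ → ℝ) (hq0 : ∀ k, 0 ≤ q k) (hq1 : HasSum q 1)
    (m : ℝ) (hm : HasSum (fun k : ℕ => (k : ℝ) * q k) m) (hm1 : m < 1)
    (lam : ℝ) (hlam0 : 0 < lam) (hlam : lam < m)
    (ν : ℕ → ℝ) (hν : IsInvMeasure q lam ν) :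
    ∀ j : ℕ, 1 ≤ j → ν j = 0 := by
  intro j hj
  by_contra hνj
  have hνj_pos : 0 < ν j := (hν.1 j).lt_of_ne' hνj
  obtain ⟨k, hk, hqk⟩ := exists_pos_of_hasSum_mul hm (hlam0.trans hlam)
  have hsum := hν.summable hq0 hq1 hm hm1 hlam0.le (hlam.trans hm1) hk hqk
  obtain ⟨θ, hlamθ, hθm⟩ := exists_between hlam
  have hgrowth : ∀ᶠ n in atTop,
      θ * (1 - extinctionProb q n) ≤ 1 - extinctionProb q (n + 1) := by
    filter_upwards [(tendsto_extinctionProb hq0 hq1 hm hm1).eventually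
      (eventually_mul_one_sub_le_one_sub_genFun hq0 hq1 hm hθm)] with n hn
    rw [extinctionProb_succ]
    exact hn (extinctionProb_mem_Icc hq0 hq1 n).1 (extinctionProb_mem_Icc hq0 hq1 n).2
  refine hlamθ.not_ge (le_of_forall_le_mul_pow_of_eventually_mul_le_succ
    (fun n => sub_pos.2 (extinctionProb_lt_one hq0 hq1 hk hqk n)) hlam0 (C := (∑' i, ν i) / ν j)
    (fun n => ?_) hgrowth)
  rw [div_mul_eq_mul_div, le_div_iff₀' hνj_pos, mul_comm _ (lam ^ n)]
  exact hν.mul_one_sub_extinctionProb_le hq0 hq1 hlam0.le hsum hj n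

theorem no_invariant_measure_below_m
    (q : ℕ → ℝ) (hq0 : ∀ k, 0 ≤ q k) (hq1 : HasSum q 1)
    (m : ℝ) (hm : HasSum (fun k : ℕ => (k : ℝ) * q k) m) (hm0 : 0 < m) (hm1 : m < 1)
    (lam : ℝ) (hlam0 : 0 < lam) (hlam : lam < m)
    (ν : ℕ → ℝ) (hν : IsInvMeasure q lam ν) :
    ∀ j : ℕ, 1 ≤ j → ν j = 0 :=
  no_invariant_measure_below_m_general q hq0 hq1 m hm hm1 lam hlam0 hlam ν hν
end

section
/- For every a ∈ (0,1) and every α < 1 with α ≠ 0, the integral ∫₀^∞ (e^{−a·x} − e^{−x})·x^{−α−1} dx converges and equals Γ(−α)·(a^α − 1), where Γ denotes the real Gamma function (extended to negative non-integer arguments). -/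
/-!
Write `(e^{-ax} - e^{-bx}) x^{s-2} = ∫_a^b x^{s-1} e^{-tx} dt`. The kernel `x^{s-1} e^{-tx}` is
nonnegative and its integral over `x > 0` is `Γ(s) t^{-s}`, bounded for `t ∈ [a, b]` since `a > 0`,
so Fubini applies and the integral equals `Γ(s) ∫_a^b t^{-s} dt`. With `s = 1 - α`, `b = 1` this is
`Γ(1 - α) (1 - a^α) / α`, and `Γ(1 - α) = -α Γ(-α)`.
-/

open MeasureTheory Real Set

theorem intervalIntegral_exp_neg_mul {x : ℝ} (hx : x ≠ 0) (a b : ℝ) :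
    ∫ t in a..b, exp (-(t * x)) = (exp (-(a * x)) - exp (-(b * x))) / x := by
  simp_rw [← mul_neg]
  rw [intervalIntegral.integral_comp_mul_right exp (neg_ne_zero.2 hx), integral_exp, smul_eq_mul,
    inv_neg, div_eq_inv_mul]
  ring

theorem integrableOn_rpow_mul_exp_neg_mul_Ioi {s t : ℝ} (hs : 0 < s) (ht : 0 < t) :
    IntegrableOn (fun x : ℝ => x ^ (s - 1) * exp (-(t * x))) (Ioi 0) := by
  simpa [neg_mul] using
    integrableOn_rpow_mul_exp_neg_mul_rpow (p := 1) (by linarith : -1 < s - 1) one_pos ht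

theorem integrable_rpow_mul_exp_neg_mul_prod {a b s : ℝ} (ha : 0 < a) (hs : 0 < s) :
    Integrable (fun p : ℝ × ℝ => p.1 ^ (s - 1) * exp (-(p.2 * p.1)))
      ((volume.restrict (Ioi 0)).prod (volume.restrict (Ioc a b))) := by
  have hmeas : AEStronglyMeasurable (fun p : ℝ × ℝ => p.1 ^ (s - 1) * exp (-(p.2 * p.1)))
      ((volume.restrict (Ioi 0)).prod (volume.restrict (Ioc a b))) := by
    fun_prop
  rw [integrable_prod_iff' hmeas]
  refine ⟨(ae_restrict_iff' measurableSet_Ioc).2 (.of_forall fun t ht =>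
    integrableOn_rpow_mul_exp_neg_mul_Ioi hs (ha.trans ht.1)), ?_⟩
  have hcont : ContinuousOn (fun t : ℝ => (1 / t) ^ s * Gamma s) (Icc a b) := by
    refine ContinuousOn.mul ?_ continuousOn_const
    exact fun t ht => ((continuousAt_const.div continuousAt_id
      (ha.trans_le ht.1).ne').rpow_const (Or.inr hs.le)).continuousWithinAt
  refine (hcont.integrableOn_Icc.mono_set Ioc_subset_Icc_self).congr_fun
    (fun t ht => ?_) measurableSet_Ioc
  dsimp only
  rw [← integral_rpow_mul_exp_neg_mul_Ioi hs (ha.trans ht.1)]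
  refine setIntegral_congr_fun measurableSet_Ioi fun x hx => ?_
  exact (norm_of_nonneg (by have : (0:ℝ) < x := hx; positivity)).symm

theorem integrableOn_and_integral_exp_neg_mul_sub_exp_neg_mul_mul_rpow {a b s : ℝ} (ha : 0 < a) (hab : a ≤ b)
    (hs : 0 < s) :
    IntegrableOn (fun x => (exp (-(a * x)) - exp (-(b * x))) * x ^ (s - 2)) (Ioi 0) ∧
    ∫ x in Ioi 0, (exp (-(a * x)) - exp (-(b * x))) * x ^ (s - 2) =
      Gamma s * ∫ t in a..b, t ^ (-s) := by
  have hF := integrable_rpow_mul_exp_neg_mul_prod (b := b) ha hs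
  have hsection : ∀ x ∈ Ioi (0 : ℝ), ∫ t in Ioc a b, x ^ (s - 1) * exp (-(t * x)) =
      (exp (-(a * x)) - exp (-(b * x))) * x ^ (s - 2) := by
    intro x hx
    rw [integral_const_mul, ← intervalIntegral.integral_of_le hab,
      intervalIntegral_exp_neg_mul (ne_of_gt hx), show s - 2 = s - 1 + -1 by ring,
      rpow_add hx, rpow_neg_one]
    ring
  refine ⟨hF.integral_prod_left.congr
    ((ae_restrict_iff' measurableSet_Ioi).2 (.of_forall hsection)), ?_⟩
  calc ∫ x in Ioi 0, (exp (-(a * x)) - exp (-(b * x))) * x ^ (s - 2)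
      = ∫ x in Ioi 0, ∫ t in Ioc a b, x ^ (s - 1) * exp (-(t * x)) :=
        (setIntegral_congr_fun measurableSet_Ioi hsection).symm
    _ = ∫ t in Ioc a b, ∫ x in Ioi 0, x ^ (s - 1) * exp (-(t * x)) :=
        integral_integral_swap hF
    _ = ∫ t in Ioc a b, Gamma s * t ^ (-s) := by
        refine setIntegral_congr_fun measurableSet_Ioc fun t ht => ?_
        have ht0 : 0 < t := ha.trans ht.1
        rw [integral_rpow_mul_exp_neg_mul_Ioi hs ht0, one_div, inv_rpow ht0.le, ← rpow_neg ht0.le,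
          mul_comm]
    _ = Gamma s * ∫ t in a..b, t ^ (-s) := by
        rw [integral_const_mul, intervalIntegral.integral_of_le hab]

theorem gamma_frullani_integral
    (a : ℝ) (ha : a ∈ Set.Ioo (0 : ℝ) 1) (α : ℝ) (hα : α < 1) (hα0 : α ≠ 0) :
    IntegrableOn (fun x => (Real.exp (-(a * x)) - Real.exp (-x)) * x ^ (-α - 1))
      (Set.Ioi 0) volume ∧
    ∫ x in Set.Ioi (0 : ℝ), (Real.exp (-(a * x)) - Real.exp (-x)) * x ^ (-α - 1) =
      Real.Gamma (-α) * (a ^ α - 1) := by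
  obtain ⟨ha0, ha1⟩ := ha
  obtain ⟨hint, heq⟩ :=
    integrableOn_and_integral_exp_neg_mul_sub_exp_neg_mul_mul_rpow ha0 ha1.le (sub_pos.2 hα)
  simp only [one_mul, show 1 - α - 2 = -α - 1 by ring] at hint heq
  refine ⟨hint, ?_⟩
  have hzero : (0 : ℝ) ∉ uIcc a 1 := by
    rw [uIcc_of_le ha1.le]
    exact fun h => h.1.not_gt ha0
  rw [heq, integral_rpow (Or.inr ⟨by contrapose! hα0; linarith, hzero⟩),
    show -(1 - α) + 1 = α by ring, one_rpow, show 1 - α = -α + 1 by ring,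
    Gamma_add_one (neg_ne_zero.2 hα0)]
  field_simp
  ring
end

section
/- Let z, w ∈ (0,1) with z ≠ w. If w < z, then there exists p₀ > 0 such that for all p ∈ (0, p₀] and all x ≥ 0, (1 − p(1−z))^{x/p} − (1 − p)^{x/p} ≥ e^{(w−1)x} − e^{−x}. If w > z, then there exists p₀ > 0 such that for all p ∈ (0, p₀] and all x ≥ 0, (1 − p(1−z))^{x/p} − (1 − p)^{x/p} ≤ e^{(w−1)x} − e^{−x}. -/
/-!
Both powers are compound-interest approximations of exponentials: for `0 < p c < 1` and `x ≥ 0`,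
`exp (-(c / (1 - p c)) x) ≤ (1 - p c) ^ (x / p) ≤ exp (-c x)`, from `1 - 1/b ≤ log b ≤ b - 1`.
If `w < z`, the first power stays above `exp ((w - 1) x)` once `c / (1 - p c) ≤ 1 - w` for
`c = 1 - z`, while the second is below `exp (-x)`. If `z < w`, the error
`exp (-x) - exp (-x / (1 - p))` is at most `exp (-x) · x p / (1 - p)` by convexity of `exp`,
which is dominated by the increment `exp ((w - 1) x) - exp ((z - 1) x) ≥ exp (-x) · (w - z) x`
as soon as `p / (1 - p) ≤ w - z`.
-/

open Real

namespace Real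

lemma one_sub_mul_rpow_div_le_exp {p c x : ℝ} (hp : 0 < p) (hpc : p * c ≤ 1) (hx : 0 ≤ x) :
    (1 - p * c) ^ (x / p) ≤ exp (-(c * x)) :=
  calc (1 - p * c) ^ (x / p) ≤ exp (-(p * c)) ^ (x / p) :=
        rpow_le_rpow (by linarith) (by linarith [add_one_le_exp (-(p * c))])
          (div_nonneg hx hp.le)
    _ = exp (-(c * x)) := by rw [← exp_mul]; congr 1; field_simp

lemma exp_le_one_sub_mul_rpow_div {p c x : ℝ} (hp : 0 < p) (hpc : p * c < 1) (hx : 0 ≤ x) :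
    exp (-(c / (1 - p * c) * x)) ≤ (1 - p * c) ^ (x / p) := by
  have hb : 0 < 1 - p * c := by linarith
  rw [rpow_def_of_pos hb, exp_le_exp]
  calc -(c / (1 - p * c) * x) = (1 - (1 - p * c)⁻¹) * (x / p) := by
        field_simp [hb.ne', show 1 - c * p ≠ 0 by linarith]; ring
    _ ≤ log (1 - p * c) * (x / p) :=
        mul_le_mul_of_nonneg_right (one_sub_inv_le_log_of_pos hb) (div_nonneg hx hp.le)

/-- Increments of `exp` grow to the right: both sides are compared with the tangent slope `exp v`. -/
lemma exp_sub_exp_le_exp_sub_exp {u v s t : ℝ} (hvs : v ≤ s) (hst : s ≤ t)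
    (hlen : v - u ≤ t - s) : exp v - exp u ≤ exp t - exp s := by
  have tangent (a b : ℝ) : exp a * (b - a) ≤ exp b - exp a := by
    have := mul_le_mul_of_nonneg_left (add_one_le_exp (b - a)) (exp_pos a).le
    rw [← exp_add, add_sub_cancel] at this
    linarith
  calc exp v - exp u ≤ exp v * (v - u) := by linarith [tangent v u]
    _ ≤ exp v * (t - s) := mul_le_mul_of_nonneg_left hlen (exp_pos v).le
    _ ≤ exp s * (t - s) := mul_le_mul_of_nonneg_right (exp_le_exp.2 hvs) (by linarith)
    _ ≤ exp t - exp s := tangent s t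

end Real

theorem elementary_exponential_inequalities_general
    (z w : ℝ) (hz : z ∈ Set.Ioo (0 : ℝ) 1) (hw : w ∈ Set.Ioo (0 : ℝ) 1) :
    (w < z → ∃ p₀ > (0 : ℝ), ∀ p ∈ Set.Ioc (0 : ℝ) p₀, ∀ x : ℝ, 0 ≤ x →
      Real.exp ((w - 1) * x) - Real.exp (-x) ≤
        (1 - p * (1 - z)) ^ (x / p) - (1 - p) ^ (x / p)) ∧
    (z < w → ∃ p₀ > (0 : ℝ), ∀ p ∈ Set.Ioc (0 : ℝ) p₀, ∀ x : ℝ, 0 ≤ x →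
      (1 - p * (1 - z)) ^ (x / p) - (1 - p) ^ (x / p) ≤
        Real.exp ((w - 1) * x) - Real.exp (-x)) := by
  obtain ⟨hz0, hz1⟩ := hz
  obtain ⟨hw0, hw1⟩ := hw
  constructor
  · intro hwz
    refine ⟨z - w, by linarith, ?_⟩
    rintro p ⟨hp0, hp⟩ x hx
    have hpc : p * (1 - z) < 1 := by nlinarith
    have hrate : (1 - z) / (1 - p * (1 - z)) ≤ 1 - w := by
      have : p * ((1 - z) * (1 - w)) ≤ p :=
        mul_le_of_le_one_right hp0.le (by nlinarith)
      rw [div_le_iff₀ (by linarith)]; nlinarith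
    have hfirst := exp_le_one_sub_mul_rpow_div hp0 hpc hx
    have hsecond := one_sub_mul_rpow_div_le_exp (c := 1) hp0 (by linarith) hx
    rw [mul_one, one_mul] at hsecond
    have hcompare : exp ((w - 1) * x) ≤ exp (-((1 - z) / (1 - p * (1 - z)) * x)) :=
      exp_le_exp.2 (by nlinarith)
    linarith
  · intro hzw
    refine ⟨(w - z) / (1 + (w - z)), by apply div_pos <;> linarith, ?_⟩
    rintro p ⟨hp0, hp⟩ x hx
    have hp1 : p < 1 := hp.trans_lt ((div_lt_one (by linarith)).2 (by linarith))
    rw [le_div_iff₀ (by linarith)] at hp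
    have hfirst := one_sub_mul_rpow_div_le_exp (c := 1 - z) hp0 (by nlinarith) hx
    have hsecond := exp_le_one_sub_mul_rpow_div (c := 1) hp0 (by nlinarith) hx
    rw [mul_one] at hsecond
    have hrate : 1 / (1 - p) - 1 ≤ w - z := by
      rw [div_sub_one (by linarith), div_le_iff₀ (by linarith)]; linarith
    have hincrement := exp_sub_exp_le_exp_sub_exp (u := -(1 / (1 - p) * x)) (v := -x)
      (s := (z - 1) * x) (t := (w - 1) * x) (by nlinarith) (by nlinarith)
      (by nlinarith [mul_le_mul_of_nonneg_right hrate hx])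
    rw [← neg_mul, neg_sub] at hfirst
    linarith

theorem elementary_exponential_inequalities
    (z w : ℝ) (hz : z ∈ Set.Ioo (0 : ℝ) 1) (hw : w ∈ Set.Ioo (0 : ℝ) 1) (hzw : z ≠ w) :
    (w < z → ∃ p₀ > (0 : ℝ), ∀ p ∈ Set.Ioc (0 : ℝ) p₀, ∀ x : ℝ, 0 ≤ x →
      Real.exp ((w - 1) * x) - Real.exp (-x) ≤
        (1 - p * (1 - z)) ^ (x / p) - (1 - p) ^ (x / p)) ∧
    (z < w → ∃ p₀ > (0 : ℝ), ∀ p ∈ Set.Ioc (0 : ℝ) p₀, ∀ x : ℝ, 0 ≤ x →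
      (1 - p * (1 - z)) ^ (x / p) - (1 - p) ^ (x / p) ≤
        Real.exp ((w - 1) * x) - Real.exp (-x)) :=
  elementary_exponential_inequalities_general z w hz hw
end

section
/- Let m ∈ (0,1), C ≥ 1, and let f : (0,∞) → [0,∞) be measurable such that for every n ∈ ℤ, either f vanishes identically on the interval [mⁿ, m^{n−1}), or f is strictly positive there and C^{−1} ≤ f(x)/f(y) ≤ C for all x, y ∈ [mⁿ, m^{n−1}). Let Λ be a locally finite Borel measure on (0,∞) satisfying Λ(A) = Λ(mA) for every Borel set A ⊆ (0,∞) and Λ([m,1)) ≠ 0. Then, with I₁ = (1/Λ([m,1)))·∫₀^∞ f dΛ and I₂ = (1/log(m^{−1}))·∫₀^∞ f(x)·x^{−1} dx (both taken as values in [0,∞]), one has C^{−1}·I₂ ≤ I₁ ≤ C·I₂. -/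
open MeasureTheory Real Set
open scoped ENNReal

/-- `Λ` is a locally finite Borel measure on `(0,∞)` (viewed as a measure on `ℝ` giving
no mass to `(-∞,0]` and finite mass to compact subsets of `(0,∞)`). -/
def IsLocFiniteOnPos (Λ : Measure ℝ) : Prop :=
  Λ (Set.Iic 0) = 0 ∧ ∀ K : Set ℝ, IsCompact K → K ⊆ Set.Ioi 0 → Λ K < ⊤

/-- `Λ(A) = Λ(mA)` for every Borel set `A ⊆ (0,∞)`. -/
def ScaleInvariant (m : ℝ) (Λ : Measure ℝ) : Prop :=
  ∀ A : Set ℝ, MeasurableSet A → A ⊆ Set.Ioi 0 →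
    Λ A = Λ ((fun x => m * x) '' A)

/-! Cut `(0,∞)` into the blocks `[mⁿ, mⁿ⁻¹)`. Scale invariance gives every block the `Λ`-mass
`Λ([m,1))`, and every block has mass `log m⁻¹` for `dx/x`. On a block `f` varies by at most the
factor `C`, so integrating `f x ≤ C f y` over `x ∼ μ` and `y ∼ ν` gives
`ν(B) ∫_B f dμ ≤ C μ(B) ∫_B f dν` for any two measures; summing over the blocks, with `(μ, ν)`
equal to `(Λ, dx/x)` and to `(dx/x, Λ)`, yields both inequalities. -/

theorem lintegral_inv_Ico {a b : ℝ} (ha : 0 < a) (hab : a ≤ b) :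
    ∫⁻ x in Ico a b, ENNReal.ofReal x⁻¹ = ENNReal.ofReal (log (b / a)) := by
  have hint : IntegrableOn (fun x : ℝ => x⁻¹) (Ioc a b) :=
    (continuousOn_inv₀.mono fun x hx => (ha.trans_le hx.1).ne').integrableOn_Icc.mono_set
      Ioc_subset_Icc_self
  have hnonneg : 0 ≤ᵐ[volume.restrict (Ioc a b)] fun x : ℝ => x⁻¹ :=
    (ae_restrict_iff' measurableSet_Ioc).2 (ae_of_all _ fun x hx => inv_nonneg.2 (ha.trans hx.1).le)
  rw [setLIntegral_congr Ico_ae_eq_Ioc, ← ofReal_integral_eq_lintegral_ofReal hint hnonneg,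
    ← intervalIntegral.integral_of_le hab, integral_inv_of_pos ha (ha.trans_le hab)]

section Blocks

variable {m : ℝ}

theorem iUnion_Ico_zpow_sub_one (hm₀ : 0 < m) (hm₁ : m < 1) :
    ⋃ n : ℤ, Ico (m ^ n) (m ^ (n - 1)) = Ioi 0 := by
  refine Subset.antisymm (iUnion_subset fun n x hx => (zpow_pos hm₀ n).trans_le hx.1)
    fun x hx => ?_
  obtain ⟨n, hn⟩ := exists_mem_Ico_zpow hx (one_lt_inv₀ hm₀ |>.2 hm₁)
  refine mem_iUnion.2 ⟨-n, ?_⟩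
  rwa [zpow_neg, show -n - 1 = -(n + 1) by ring, zpow_neg, ← inv_zpow, ← inv_zpow]

theorem pairwise_disjoint_Ico_zpow_sub_one (hm₀ : 0 < m) (hm₁ : m < 1) :
    Pairwise (Function.onFun Disjoint fun n : ℤ => Ico (m ^ n) (m ^ (n - 1))) := by
  simpa only [Order.pred_eq_sub_one] using
    (zpow_right_anti₀ hm₀ hm₁.le).pairwise_disjoint_on_Ico_pred

theorem image_mul_left_Ico_zpow_sub_one (hm₀ : 0 < m) (n : ℤ) :
    (fun x => m * x) '' Ico (m ^ n) (m ^ (n - 1)) = Ico (m ^ (n + 1)) (m ^ n) := by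
  rw [image_mul_left_Ico hm₀, ← zpow_one_add₀ hm₀.ne', ← zpow_one_add₀ hm₀.ne', add_comm,
    add_sub_cancel]

theorem ScaleInvariant.measure_Ico_zpow_sub_one {Λ : Measure ℝ} (hΛ : ScaleInvariant m Λ)
    (hm₀ : 0 < m) (n : ℤ) : Λ (Ico (m ^ n) (m ^ (n - 1))) = Λ (Ico m 1) := by
  have hper : Function.Periodic (fun k : ℤ => Λ (Ico (m ^ k) (m ^ (k - 1)))) 1 := fun k => by
    dsimp only
    rw [hΛ _ measurableSet_Ico fun x hx => (zpow_pos hm₀ k).trans_le hx.1,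
      image_mul_left_Ico_zpow_sub_one hm₀, add_sub_cancel_right]
  simpa using (hper.int_mul_eq n).trans (hper 0).symm

theorem volume_withDensity_inv_Ico_zpow_sub_one (hm₀ : 0 < m) (hm₁ : m ≤ 1) (n : ℤ) :
    volume.withDensity (fun x => ENNReal.ofReal x⁻¹) (Ico (m ^ n) (m ^ (n - 1))) =
      ENNReal.ofReal (log m⁻¹) := by
  rw [withDensity_apply _ measurableSet_Ico, lintegral_inv_Ico (zpow_pos hm₀ n)
    (zpow_le_zpow_right_of_le_one₀ hm₀ hm₁ (by omega)), zpow_sub_one₀ hm₀.ne',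
    mul_div_cancel_left₀ _ (zpow_pos hm₀ n).ne']

end Blocks

theorem IsLocFiniteOnPos.measure_Ico_ne_top {Λ : Measure ℝ} (hΛ : IsLocFiniteOnPos Λ) {a : ℝ}
    (ha : 0 < a) (b : ℝ) : Λ (Ico a b) ≠ ⊤ :=
  ((measure_mono Ico_subset_Icc_self).trans_lt
    (hΛ.2 _ isCompact_Icc fun _ hx => ha.trans_le hx.1)).ne

theorem setLIntegral_Ioi_ofReal_div_eq {f : ℝ → ℝ} (hf : Measurable f) :
    ∫⁻ x in Ioi 0, ENNReal.ofReal (f x / x) =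
      ∫⁻ x in Ioi 0, ENNReal.ofReal (f x) ∂volume.withDensity fun x => ENNReal.ofReal x⁻¹ := by
  rw [setLIntegral_withDensity_eq_setLIntegral_mul _ measurable_inv.ennreal_ofReal
    hf.ennreal_ofReal measurableSet_Ioi]
  refine setLIntegral_congr_fun measurableSet_Ioi fun x hx => ?_
  rw [Pi.mul_apply, ← ENNReal.ofReal_mul (inv_nonneg.2 (le_of_lt hx)), div_eq_inv_mul]

section BlockComparison

variable {α ι : Type*} [MeasurableSpace α] {μ ν : Measure α} {g : α → ℝ≥0∞} {c : ℝ≥0∞}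

theorem measure_mul_setLIntegral_le_of_le_mul {s : Set α} (hs : MeasurableSet s)
    (hg : Measurable g) (hgc : ∀ x ∈ s, ∀ y ∈ s, g x ≤ c * g y) :
    ν s * ∫⁻ x in s, g x ∂μ ≤ c * (μ s * ∫⁻ y in s, g y ∂ν) :=
  calc ν s * ∫⁻ x in s, g x ∂μ = ∫⁻ _ in s, ∫⁻ x in s, g x ∂μ ∂ν := by
        rw [setLIntegral_const, mul_comm]
    _ ≤ ∫⁻ y in s, c * μ s * g y ∂ν := setLIntegral_mono' hs fun y hy =>
        calc ∫⁻ x in s, g x ∂μ ≤ ∫⁻ _ in s, c * g y ∂μ :=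
              setLIntegral_mono' hs fun x hx => hgc x hx y hy
          _ = c * μ s * g y := by rw [setLIntegral_const, mul_right_comm]
    _ = c * (μ s * ∫⁻ y in s, g y ∂ν) := by rw [lintegral_const_mul _ hg, mul_assoc]

theorem mul_setLIntegral_iUnion_le_of_le_mul [Countable ι] {s : ι → Set α}
    (hs : ∀ i, MeasurableSet (s i)) (hdisj : Pairwise (Function.onFun Disjoint s))
    {a b : ℝ≥0∞} (hμ : ∀ i, μ (s i) = a) (hν : ∀ i, ν (s i) = b) (hg : Measurable g)
    (hgc : ∀ i, ∀ x ∈ s i, ∀ y ∈ s i, g x ≤ c * g y) :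
    b * ∫⁻ x in ⋃ i, s i, g x ∂μ ≤ c * (a * ∫⁻ y in ⋃ i, s i, g y ∂ν) := by
  simp only [lintegral_iUnion hs hdisj, ← ENNReal.tsum_mul_left]
  refine ENNReal.tsum_le_tsum fun i => ?_
  simpa only [hμ, hν] using
    measure_mul_setLIntegral_le_of_le_mul (μ := μ) (ν := ν) (hs i) hg (hgc i)

end BlockComparison

theorem ENNReal.inv_mul_le_mul_inv_mul {a b c x y : ℝ≥0∞} (ha₀ : a ≠ 0) (ha : a ≠ ⊤)
    (hb₀ : b ≠ 0) (hb : b ≠ ⊤) (h : b * x ≤ c * (a * y)) : a⁻¹ * x ≤ c * (b⁻¹ * y) :=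
  calc a⁻¹ * x = (b⁻¹ * b) * (a⁻¹ * x) := by rw [ENNReal.inv_mul_cancel hb₀ hb, one_mul]
    _ = a⁻¹ * b⁻¹ * (b * x) := by ring
    _ ≤ a⁻¹ * b⁻¹ * (c * (a * y)) := by gcongr
    _ = (a⁻¹ * a) * (c * (b⁻¹ * y)) := by ring
    _ = c * (b⁻¹ * y) := by rw [ENNReal.inv_mul_cancel ha₀ ha, one_mul]

theorem le_mul_of_eq_zero_or_ratio_le {s : Set ℝ} {f : ℝ → ℝ} {C : ℝ}
    (hs : (∀ x ∈ s, f x = 0) ∨ ((∀ x ∈ s, 0 < f x) ∧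
        ∀ x ∈ s, ∀ y ∈ s, C⁻¹ ≤ f x / f y ∧ f x / f y ≤ C)) :
    ∀ x ∈ s, ∀ y ∈ s, f x ≤ C * f y := by
  rcases hs with hzero | ⟨hpos, hratio⟩
  · intro x hx y hy
    rw [hzero x hx, hzero y hy, mul_zero]
  · intro x hx y hy
    exact (div_le_iff₀ (hpos y hy)).1 (hratio x hx y hy).2

theorem selfsimilar_integral_comparison_general
    (m : ℝ) (hm : m ∈ Set.Ioo (0 : ℝ) 1) (C : ℝ) (hC : 1 ≤ C)
    (f : ℝ → ℝ) (hmeas : Measurable f)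
    (hreg : ∀ n : ℤ,
      (∀ x ∈ Set.Ico (m ^ n) (m ^ (n - 1)), f x = 0) ∨
      ((∀ x ∈ Set.Ico (m ^ n) (m ^ (n - 1)), 0 < f x) ∧
        ∀ x ∈ Set.Ico (m ^ n) (m ^ (n - 1)), ∀ y ∈ Set.Ico (m ^ n) (m ^ (n - 1)),
          C⁻¹ ≤ f x / f y ∧ f x / f y ≤ C))
    (Λ : Measure ℝ) (hΛ : IsLocFiniteOnPos Λ) (hs : ScaleInvariant m Λ)
    (hne : Λ (Set.Ico m 1) ≠ 0) :
    ENNReal.ofReal C⁻¹ *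
        ((ENNReal.ofReal (Real.log m⁻¹))⁻¹ *
          ∫⁻ x in Set.Ioi (0 : ℝ), ENNReal.ofReal (f x / x)) ≤
      (Λ (Set.Ico m 1))⁻¹ * ∫⁻ x in Set.Ioi (0 : ℝ), ENNReal.ofReal (f x) ∂Λ ∧
    (Λ (Set.Ico m 1))⁻¹ * ∫⁻ x in Set.Ioi (0 : ℝ), ENNReal.ofReal (f x) ∂Λ ≤
      ENNReal.ofReal C *
        ((ENNReal.ofReal (Real.log m⁻¹))⁻¹ *
          ∫⁻ x in Set.Ioi (0 : ℝ), ENNReal.ofReal (f x / x)) := by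
  obtain ⟨hm₀, hm₁⟩ := hm
  have hC₀ : 0 < C := one_pos.trans_le hC
  have hcomp : ∀ n : ℤ, ∀ x ∈ Ico (m ^ n) (m ^ (n - 1)), ∀ y ∈ Ico (m ^ n) (m ^ (n - 1)),
      ENNReal.ofReal (f x) ≤ ENNReal.ofReal C * ENNReal.ofReal (f y) := fun n x hx y hy => by
    rw [← ENNReal.ofReal_mul hC₀.le]
    exact ENNReal.ofReal_le_ofReal (le_mul_of_eq_zero_or_ratio_le (hreg n) x hx y hy)
  have hℓ : ENNReal.ofReal (log m⁻¹) ≠ 0 :=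
    ENNReal.ofReal_pos.2 (log_pos ((one_lt_inv₀ hm₀).2 hm₁)) |>.ne'
  set ν := volume.withDensity fun x : ℝ => ENNReal.ofReal x⁻¹
  have hL := hΛ.measure_Ico_ne_top hm₀ 1
  have hν := volume_withDensity_inv_Ico_zpow_sub_one hm₀ hm₁.le
  rw [setLIntegral_Ioi_ofReal_div_eq hmeas, ← iUnion_Ico_zpow_sub_one hm₀ hm₁]
  have hblocks := fun n : ℤ => measurableSet_Ico (a := m ^ n) (b := m ^ (n - 1))
  have hdisj := pairwise_disjoint_Ico_zpow_sub_one hm₀ hm₁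
  have hΛν := mul_setLIntegral_iUnion_le_of_le_mul (μ := Λ) (ν := ν) hblocks hdisj
    (hs.measure_Ico_zpow_sub_one hm₀) hν hmeas.ennreal_ofReal hcomp
  have hνΛ := mul_setLIntegral_iUnion_le_of_le_mul (μ := ν) (ν := Λ) hblocks hdisj
    hν (hs.measure_Ico_zpow_sub_one hm₀) hmeas.ennreal_ofReal hcomp
  refine ⟨?_, ENNReal.inv_mul_le_mul_inv_mul hne hL hℓ ENNReal.ofReal_ne_top hΛν⟩
  rw [ENNReal.ofReal_inv_of_pos hC₀, ENNReal.inv_mul_le_iff (ENNReal.ofReal_pos.2 hC₀).ne'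
    ENNReal.ofReal_ne_top]
  exact ENNReal.inv_mul_le_mul_inv_mul hℓ ENNReal.ofReal_ne_top hne hL hνΛ

theorem selfsimilar_integral_comparison
    (m : ℝ) (hm : m ∈ Set.Ioo (0 : ℝ) 1) (C : ℝ) (hC : 1 ≤ C)
    (f : ℝ → ℝ) (hmeas : Measurable f) (hf0 : ∀ x, 0 ≤ f x)
    (hreg : ∀ n : ℤ,
      (∀ x ∈ Set.Ico (m ^ n) (m ^ (n - 1)), f x = 0) ∨
      ((∀ x ∈ Set.Ico (m ^ n) (m ^ (n - 1)), 0 < f x) ∧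
        ∀ x ∈ Set.Ico (m ^ n) (m ^ (n - 1)), ∀ y ∈ Set.Ico (m ^ n) (m ^ (n - 1)),
          C⁻¹ ≤ f x / f y ∧ f x / f y ≤ C))
    (Λ : Measure ℝ) (hΛ : IsLocFiniteOnPos Λ) (hs : ScaleInvariant m Λ)
    (hne : Λ (Set.Ico m 1) ≠ 0) :
    ENNReal.ofReal C⁻¹ *
        ((ENNReal.ofReal (Real.log m⁻¹))⁻¹ *
          ∫⁻ x in Set.Ioi (0 : ℝ), ENNReal.ofReal (f x / x)) ≤
      (Λ (Set.Ico m 1))⁻¹ * ∫⁻ x in Set.Ioi (0 : ℝ), ENNReal.ofReal (f x) ∂Λ ∧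
    (Λ (Set.Ico m 1))⁻¹ * ∫⁻ x in Set.Ioi (0 : ℝ), ENNReal.ofReal (f x) ∂Λ ≤
      ENNReal.ofReal C *
        ((ENNReal.ofReal (Real.log m⁻¹))⁻¹ *
          ∫⁻ x in Set.Ioi (0 : ℝ), ENNReal.ofReal (f x / x)) :=
  selfsimilar_integral_comparison_general m hm C hC f hmeas hreg Λ hΛ hs hne
end
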